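/- Fix ω₁, ω₂ ∈ ℂ∖{0} and λ ∈ ℂ; set q = exp(πiω₁/ω₂) and assume q² ≠ 1. On the space of all functions φ : ℂ → ℂ define linear operators by (Kφ)(t) = e^{πiλ/ω₂}·φ(t − iω₁), (K'φ)(t) = e^{−πiλ/ω₂}·φ(t + iω₁), (Eφ)(t) = (q − q⁻¹)⁻¹·e^{−2πt/ω₂}·(φ(t) − φ(t − iω₁)), (Fφ)(t) = q(q − q⁻¹)⁻¹·e^{2πt/ω₂}·(e^{πiλ/ω₂}·φ(t) − e^{−πiλ/ω₂}·φ(t + iω₁)). Then: (i) K ∘ K' = K' ∘ K = id; (ii) K ∘ E = q²·(E ∘ K); (iii) K ∘ F = q⁻²·(F ∘ K); (iv) (q − q⁻¹)·(E ∘ F − F ∘ E) = K − K'; (v) the Casimir operator acts as a scalar: q·K + q⁻¹·K' + (q − q⁻¹)²·(F ∘ E) = (q·e^{πiλ/ω₂} + q⁻¹·e^{−πiλ/ω₂})·id. (The principal series representation π_λ of U_q(sl(2,ℝ)).) -/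

import Mathlib

/-!
Each operator is a combination of multiplications and of translations by `±iω₁`, and the only
property of the multiplier `h t = e^{2πt/ω₂}` that matters is its quasi-periodicity
`h (t + iω₁) = q² · h t`. Evaluated at a point, every relation therefore becomes a rational
identity in `q`, `e^{πiλ/ω₂}` and `h t`.
-/

/-- The operator `φ(t) ↦ g(t)·φ(t + s)` on functions `ℂ → ℂ`. -/
noncomputable def shiftMulOp (g : ℂ → ℂ) (s : ℂ) : (ℂ → ℂ) →ₗ[ℂ] (ℂ → ℂ) where
  toFun φ := fun t => g t * φ (t + s)
  map_add' φ ψ := by funext t; simp [mul_add]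
  map_smul' c φ := by funext t; simp [smul_eq_mul]; ring

@[simp]
lemma shiftMulOp_apply (g : ℂ → ℂ) (s : ℂ) (φ : ℂ → ℂ) (t : ℂ) :
    shiftMulOp g s φ t = g t * φ (t + s) :=
  rfl

namespace PrincipalSeries

variable (h : ℂ → ℂ) (s q b : ℂ)

noncomputable def K : (ℂ → ℂ) →ₗ[ℂ] (ℂ → ℂ) := shiftMulOp (fun _ => b) (-s)

noncomputable def K' : (ℂ → ℂ) →ₗ[ℂ] (ℂ → ℂ) := shiftMulOp (fun _ => b⁻¹) s

noncomputable def E : (ℂ → ℂ) →ₗ[ℂ] (ℂ → ℂ) :=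
  (q - q⁻¹)⁻¹ • (shiftMulOp h⁻¹ 0 - shiftMulOp h⁻¹ (-s))

noncomputable def F : (ℂ → ℂ) →ₗ[ℂ] (ℂ → ℂ) :=
  (q * (q - q⁻¹)⁻¹) • (b • shiftMulOp h 0 - b⁻¹ • shiftMulOp h s)

noncomputable def casimir : (ℂ → ℂ) →ₗ[ℂ] (ℂ → ℂ) :=
  q • K s b + q⁻¹ • K' s b + (q - q⁻¹) ^ 2 • (F h s q b ∘ₗ E h s q)

variable {h s q b} (φ : ℂ → ℂ) (t : ℂ)

lemma K_apply : K s b φ t = b * φ (t - s) := by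
  simp [K, sub_eq_add_neg]

lemma K'_apply : K' s b φ t = b⁻¹ * φ (t + s) :=
  rfl

lemma E_apply : E h s q φ t = (q - q⁻¹)⁻¹ * (h t)⁻¹ * (φ t - φ (t - s)) := by
  simp only [E, LinearMap.smul_apply, LinearMap.sub_apply, Pi.smul_apply, Pi.sub_apply,
    shiftMulOp_apply, Pi.inv_apply, add_zero, smul_eq_mul, ← sub_eq_add_neg]
  ring

lemma F_apply : F h s q b φ t = q * (q - q⁻¹)⁻¹ * h t * (b * φ t - b⁻¹ * φ (t + s)) := by
  simp [F, mul_sub, mul_assoc, mul_left_comm]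

lemma apply_sub_of_apply_add (hh : ∀ t, h (t + s) = q ^ 2 * h t) (hq : q ≠ 0) (t : ℂ) :
    h (t - s) = h t / q ^ 2 := by
  rw [eq_div_iff (pow_ne_zero 2 hq), mul_comm, ← hh, sub_add_cancel]

lemma K_comp_K' (hb : b ≠ 0) : K s b ∘ₗ K' s b = LinearMap.id := by
  ext φ t
  simp [K_apply, K'_apply, hb]

lemma K'_comp_K (hb : b ≠ 0) : K' s b ∘ₗ K s b = LinearMap.id := by
  ext φ t
  simp [K_apply, K'_apply, hb]

lemma K_comp_E (hh : ∀ t, h (t + s) = q ^ 2 * h t) (hq : q ≠ 0) :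
    K s b ∘ₗ E h s q = q ^ 2 • (E h s q ∘ₗ K s b) := by
  ext φ t
  simp only [LinearMap.comp_apply, LinearMap.smul_apply, Pi.smul_apply, smul_eq_mul, K_apply,
    E_apply, apply_sub_of_apply_add hh hq, inv_div]
  ring

lemma K_comp_F (hh : ∀ t, h (t + s) = q ^ 2 * h t) (hq : q ≠ 0) :
    K s b ∘ₗ F h s q b = q⁻¹ ^ 2 • (F h s q b ∘ₗ K s b) := by
  ext φ t
  simp only [LinearMap.comp_apply, LinearMap.smul_apply, Pi.smul_apply, smul_eq_mul, K_apply,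
    F_apply, apply_sub_of_apply_add hh hq, sub_add_cancel, add_sub_cancel_right]
  ring

lemma commutator_E_F (hh : ∀ t, h (t + s) = q ^ 2 * h t) (hh₀ : ∀ t, h t ≠ 0) (hq : q ≠ 0)
    (hq₂ : q ^ 2 ≠ 1) (hb : b ≠ 0) :
    (q - q⁻¹) • (E h s q ∘ₗ F h s q b - F h s q b ∘ₗ E h s q) = K s b - K' s b := by
  have hq₂' : q ^ 2 - 1 ≠ 0 := sub_ne_zero.mpr hq₂
  ext φ t
  simp only [LinearMap.comp_apply, LinearMap.smul_apply, LinearMap.sub_apply, Pi.smul_apply,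
    Pi.sub_apply, smul_eq_mul, K_apply, K'_apply, E_apply, F_apply, hh,
    apply_sub_of_apply_add hh hq, sub_add_cancel, add_sub_cancel_right]
  have hht := hh₀ t
  field_simp
  ring

lemma casimir_eq_smul_id (hh : ∀ t, h (t + s) = q ^ 2 * h t) (hh₀ : ∀ t, h t ≠ 0)
    (hq : q ≠ 0) (hq₂ : q ^ 2 ≠ 1) (hb : b ≠ 0) :
    casimir h s q b = (q * b + q⁻¹ * b⁻¹) • LinearMap.id := by
  have hq₂' : q ^ 2 - 1 ≠ 0 := sub_ne_zero.mpr hq₂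
  ext φ t
  simp only [casimir, LinearMap.comp_apply, LinearMap.smul_apply, LinearMap.add_apply,
    LinearMap.id_apply, Pi.smul_apply, Pi.add_apply, smul_eq_mul, K_apply, K'_apply, E_apply,
    F_apply, hh, add_sub_cancel_right]
  have hht := hh₀ t
  field_simp
  ring

end PrincipalSeries

theorem principal_series_representation (ω₁ ω₂ lam : ℂ)
    (hq2 : Complex.exp ((Real.pi : ℂ) * Complex.I * ω₁ / ω₂) ^ 2 ≠ 1) :
    let q := Complex.exp ((Real.pi : ℂ) * Complex.I * ω₁ / ω₂)
    let K := shiftMulOp (fun _ => Complex.exp ((Real.pi : ℂ) * Complex.I * lam / ω₂))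
        (-(Complex.I * ω₁))
    let K' := shiftMulOp (fun _ => Complex.exp (-((Real.pi : ℂ) * Complex.I * lam / ω₂)))
        (Complex.I * ω₁)
    let E := (q - q⁻¹)⁻¹ •
        (shiftMulOp (fun t => Complex.exp (-(2 * (Real.pi : ℂ) * t / ω₂))) 0
          - shiftMulOp (fun t => Complex.exp (-(2 * (Real.pi : ℂ) * t / ω₂))) (-(Complex.I * ω₁)))
    let F := (q * (q - q⁻¹)⁻¹) •
        (Complex.exp ((Real.pi : ℂ) * Complex.I * lam / ω₂) •
            shiftMulOp (fun t => Complex.exp (2 * (Real.pi : ℂ) * t / ω₂)) 0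
          - Complex.exp (-((Real.pi : ℂ) * Complex.I * lam / ω₂)) •
            shiftMulOp (fun t => Complex.exp (2 * (Real.pi : ℂ) * t / ω₂)) (Complex.I * ω₁))
    (K ∘ₗ K' = LinearMap.id ∧ K' ∘ₗ K = LinearMap.id) ∧
    K ∘ₗ E = q ^ 2 • (E ∘ₗ K) ∧
    K ∘ₗ F = (q⁻¹) ^ 2 • (F ∘ₗ K) ∧
    (q - q⁻¹) • (E ∘ₗ F - F ∘ₗ E) = K - K' ∧
    q • K + q⁻¹ • K' + (q - q⁻¹) ^ 2 • (F ∘ₗ E)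
      = (q * Complex.exp ((Real.pi : ℂ) * Complex.I * lam / ω₂)
          + q⁻¹ * Complex.exp (-((Real.pi : ℂ) * Complex.I * lam / ω₂))) • LinearMap.id := by
  intro q K K' E F
  set h : ℂ → ℂ := fun t => Complex.exp (2 * Real.pi * t / ω₂)
  set b := Complex.exp (Real.pi * Complex.I * lam / ω₂)
  have hh : ∀ t, h (t + Complex.I * ω₁) = q ^ 2 * h t := fun t => by
    simp only [h, q, ← Complex.exp_nat_mul, ← Complex.exp_add]
    congr 1
    ring
  have hK' : K' = PrincipalSeries.K' (Complex.I * ω₁) b := by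
    simp only [K', PrincipalSeries.K', b, Complex.exp_neg]
  have hE : E = PrincipalSeries.E h (Complex.I * ω₁) q := by
    simp only [E, PrincipalSeries.E, h, Pi.inv_def, Complex.exp_neg]
  have hF : F = PrincipalSeries.F h (Complex.I * ω₁) q b := by
    simp only [F, PrincipalSeries.F, h, b, Complex.exp_neg]
  rw [hK', hE, hF, Complex.exp_neg]
  have hq : q ≠ 0 := Complex.exp_ne_zero _
  have hb : b ≠ 0 := Complex.exp_ne_zero _
  have hh₀ : ∀ t, h t ≠ 0 := fun _ => Complex.exp_ne_zero _
  exact ⟨⟨PrincipalSeries.K_comp_K' hb, PrincipalSeries.K'_comp_K hb⟩,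
    PrincipalSeries.K_comp_E hh hq, PrincipalSeries.K_comp_F hh hq,
    PrincipalSeries.commutator_E_F hh hh₀ hq hq2 hb,
    PrincipalSeries.casimir_eq_smul_id hh hh₀ hq hq2 hb⟩
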